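/- Let d ≥ 1 and let F : ℝ^d → ℝ^d be a continuous single-valued cyclically quasi-monotone map with F(x) ≠ 0 for every x ∈ ℝ^d. Then for every x, x' ∈ ℝ^d, the interiors of C^F(x) and C^F(x') have non-empty intersection. -/

import Mathlib

open scoped RealInnerProductSpace

/-- Cyclic quasi-monotonicity of a single-valued map `F : ℝ^d → ℝ^d`. -/
def CyclicallyQuasiMonotoneS {d : ℕ}
    (F : EuclideanSpace ℝ (Fin d) → EuclideanSpace ℝ (Fin d)) : Prop :=
  ∀ (N : ℕ) (x : ℕ → EuclideanSpace ℝ (Fin d)),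
    0 < N → x N = x 0 →
    ∃ i < N, ⟪F (x i), x (i + 1) - x i⟫ ≤ 0

/-- `a ≺_F b`: there is an `F`-ascending path from `a` to `b`. -/
def PrecS {d : ℕ} (F : EuclideanSpace ℝ (Fin d) → EuclideanSpace ℝ (Fin d))
    (a b : EuclideanSpace ℝ (Fin d)) : Prop :=
  ∃ (N : ℕ) (x : ℕ → EuclideanSpace ℝ (Fin d)),
    0 < N ∧ x 0 = a ∧ x N = b ∧ ∀ i < N, 0 < ⟪F (x i), x (i + 1) - x i⟫

/-- `a ⪯_F b`: `{w : w ≺_F a} ⊆ {w : w ≺_F b}`. -/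
def PreceqS {d : ℕ} (F : EuclideanSpace ℝ (Fin d) → EuclideanSpace ℝ (Fin d))
    (a b : EuclideanSpace ℝ (Fin d)) : Prop :=
  ∀ w, PrecS F w a → PrecS F w b

/-- The convex set `C^F(x) = {w : w ⪯_F x}`. -/
def CS {d : ℕ} (F : EuclideanSpace ℝ (Fin d) → EuclideanSpace ℝ (Fin d))
    (x : EuclideanSpace ℝ (Fin d)) : Set (EuclideanSpace ℝ (Fin d)) :=
  {w | PreceqS F w x}

open scoped Topology
open Filter Set

/-!
Take a closed ball `B` having `x` and `x'` in its interior. Compactness of `B` and cyclic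
quasi-monotonicity give a Minty point `v ∈ B`, i.e. `⟪F z, v - z⟫ ≤ 0` for all `z ∈ B`: otherwise
finitely many open half-spaces `{w | 0 < ⟪F z, w - z⟫}` cover `B`, and going backwards along strict
ascents inside that finite set of centres closes up an ascending cycle. Continuity of `F` along
segments turns this into the Stampacchia inequality `0 ≤ ⟪F v, z - v⟫` on `B`, which is strict at
interior points since `F v ≠ 0`. Hence one ascending step leads from `v` to both `x` and `x'`, and
by continuity of `F` the same holds on a neighbourhood of `v`.
-/

lemma Set.Finite.exists_cycle_of_forall_exists_rel {α : Type*} {T : Set α} {R : α → α → Prop}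
    (hT : T.Finite) (hne : T.Nonempty) (h : ∀ a ∈ T, ∃ b ∈ T, R b a) :
    ∃ N > 0, ∃ c : ℕ → α, c N = c 0 ∧ ∀ i < N, R (c i) (c (i + 1)) := by
  choose! g hgT hg using h
  obtain ⟨w, hw⟩ := hne
  have hmem : ∀ n, g^[n] w ∈ T := fun n => (MapsTo.iterate hgT n) hw
  obtain ⟨a, b, hab, heq⟩ := hT.exists_lt_map_eq_of_forall_mem hmem
  -- `g` picks predecessors, so the iterates from `a` to `b` form a cycle run backwards
  refine ⟨b - a, by omega, fun i => g^[b - i] w, ?_, fun i hi => ?_⟩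
  · simp only [Nat.sub_sub_self hab.le, Nat.sub_zero, heq]
  · have hsucc : b - i = (b - (i + 1)) + 1 := by omega
    simp only [hsucc, Function.iterate_succ_apply']
    exact hg _ (hmem _)

variable {E : Type*} [NormedAddCommGroup E] [InnerProductSpace ℝ E]

lemma inner_nonneg_of_forall_inner_nonpos {F : E → E} {K : Set E} (hK : Convex ℝ K) {v z : E}
    (hF : ContinuousWithinAt F K v) (hv : v ∈ K) (hz : z ∈ K)
    (hminty : ∀ w ∈ K, ⟪F w, v - w⟫ ≤ 0) : 0 ≤ ⟪F v, z - v⟫ := by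
  set p : ℝ → E := fun t => v + t • (z - v)
  have hpK : ∀ t ∈ Icc (0 : ℝ) 1, p t ∈ K := fun t ht => by
    convert hK hv hz (sub_nonneg.2 ht.2) ht.1 (sub_add_cancel 1 t) using 1
    simp only [p]
    module
  have hp : Tendsto p (𝓝[>] 0) (𝓝[K] v) := by
    refine tendsto_nhdsWithin_iff.2 ⟨?_, ?_⟩
    · have : Continuous p := by fun_prop
      simpa [p] using this.continuousWithinAt.tendsto (x := 0) (s := Ioi 0)
    · filter_upwards [Ioc_mem_nhdsGT one_pos] with t ht using hpK t (Ioc_subset_Icc_self ht)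
  have hlim : Tendsto (fun t => ⟪F (p t), z - v⟫) (𝓝[>] 0) (𝓝 ⟪F v, z - v⟫) :=
    (hF.tendsto.comp hp).inner tendsto_const_nhds
  refine ge_of_tendsto hlim ?_
  filter_upwards [Ioc_mem_nhdsGT one_pos] with t ht
  have hstep := hminty (p t) (hpK t (Ioc_subset_Icc_self ht))
  have hdiff : v - p t = (-t) • (z - v) := by simp [p, neg_smul]
  rw [hdiff, real_inner_smul_right] at hstep
  nlinarith [ht.1]

lemma inner_pos_of_mem_interior {K : Set E} {u v y : E} (hu : u ≠ 0)
    (hK : ∀ z ∈ K, 0 ≤ ⟪u, z - v⟫) (hy : y ∈ interior K) : 0 < ⟪u, y - v⟫ := by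
  have hnear : ∀ᶠ t in 𝓝[>] (0 : ℝ), y - t • u ∈ K := by
    have : Tendsto (fun t : ℝ => y - t • u) (𝓝 0) (𝓝 y) := by
      have hc : Continuous fun t : ℝ => y - t • u := by fun_prop
      simpa using hc.tendsto 0
    exact nhdsWithin_le_nhds (this (mem_interior_iff_mem_nhds.1 hy))
  obtain ⟨t, hyt, ht⟩ := (hnear.and self_mem_nhdsWithin).exists
  have h := hK _ hyt
  rw [sub_right_comm, inner_sub_right, real_inner_smul_right, real_inner_self_eq_norm_sq] at h
  have : 0 < t * ‖u‖ ^ 2 := mul_pos ht (by positivity)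
  linarith

section Euclidean

variable {d : ℕ} {F : EuclideanSpace ℝ (Fin d) → EuclideanSpace ℝ (Fin d)}

lemma PrecS.snoc {a b y : EuclideanSpace ℝ (Fin d)} (hab : PrecS F a b)
    (hy : 0 < ⟪F b, y - b⟫) : PrecS F a y := by
  obtain ⟨N, p, hN, hp0, hpN, hstep⟩ := hab
  refine ⟨N + 1, fun i => if i ≤ N then p i else y, by omega, by simpa using hp0, by simp, ?_⟩
  intro i hi
  rcases Nat.lt_succ_iff_lt_or_eq.1 hi with hi | rfl
  · simpa [hi.le, Nat.succ_le_of_lt hi] using hstep i hi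
  · simpa [hpN] using hy

lemma mem_CS_of_inner_pos {w y : EuclideanSpace ℝ (Fin d)} (hw : 0 < ⟪F w, y - w⟫) :
    w ∈ CS F y :=
  fun _ hv => hv.snoc hw

lemma mem_interior_CS_of_inner_pos (hF : Continuous F) {w y : EuclideanSpace ℝ (Fin d)}
    (hw : 0 < ⟪F w, y - w⟫) : w ∈ interior (CS F y) := by
  have hopen : IsOpen {w | 0 < ⟪F w, y - w⟫} :=
    isOpen_lt continuous_const (hF.inner (continuous_const.sub continuous_id))
  exact interior_maximal (fun _ => mem_CS_of_inner_pos) hopen hw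

lemma CyclicallyQuasiMonotoneS.exists_forall_inner_nonpos (hF : CyclicallyQuasiMonotoneS F)
    {K : Set (EuclideanSpace ℝ (Fin d))} (hK : IsCompact K) (hne : K.Nonempty) :
    ∃ v ∈ K, ∀ z ∈ K, ⟪F z, v - z⟫ ≤ 0 := by
  by_contra! hcover
  have hopen : ∀ z ∈ K, IsOpen {v | 0 < ⟪F z, v - z⟫} := fun z _ =>
    isOpen_lt continuous_const (continuous_const.inner (continuous_id.sub continuous_const))
  obtain ⟨T, hTK, hT, hKT⟩ := hK.elim_finite_subcover_image hopen fun v hv => by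
    simpa using hcover v hv
  have hpred : ∀ a ∈ T, ∃ b ∈ T, 0 < ⟪F b, a - b⟫ := fun a ha => by
    simpa using hKT (hTK ha)
  have hTne : T.Nonempty := by
    obtain ⟨v, hv⟩ := hne
    obtain ⟨b, hb, -⟩ := mem_iUnion₂.1 (hKT hv)
    exact ⟨b, hb⟩
  obtain ⟨N, hN, c, hc, hasc⟩ := hT.exists_cycle_of_forall_exists_rel hTne hpred
  obtain ⟨i, hi, hle⟩ := hF N c hN hc
  exact (hasc i hi).not_ge hle

end Euclidean

theorem stmt16_general (d : ℕ)
    (F : EuclideanSpace ℝ (Fin d) → EuclideanSpace ℝ (Fin d))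
    (hcont : Continuous F) (hF : CyclicallyQuasiMonotoneS F)
    (hnv : ∀ x, F x ≠ 0) (x x' : EuclideanSpace ℝ (Fin d)) :
    (interior (CS F x) ∩ interior (CS F x')).Nonempty := by
  have hr : 0 < dist x' x + 1 := by positivity
  set B := Metric.closedBall x (dist x' x + 1)
  have hball : ∀ y, dist y x < dist x' x + 1 → y ∈ interior B := fun y hy =>
    Metric.ball_subset_interior_closedBall hy
  obtain ⟨v, hvB, hminty⟩ := hF.exists_forall_inner_nonpos (isCompact_closedBall _ _)
    ⟨x, Metric.mem_closedBall_self hr.le⟩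
  have hstampacchia : ∀ z ∈ B, 0 ≤ ⟪F v, z - v⟫ := fun z hz =>
    inner_nonneg_of_forall_inner_nonpos (convex_closedBall _ _) hcont.continuousWithinAt hvB hz
      hminty
  have hascent : ∀ y ∈ interior B, v ∈ interior (CS F y) := fun y hy =>
    mem_interior_CS_of_inner_pos hcont (inner_pos_of_mem_interior (hnv v) hstampacchia hy)
  exact ⟨v, hascent x (hball x (by simpa using hr)), hascent x' (hball x' (by linarith))⟩

theorem stmt16 (d : ℕ) (hd : 1 ≤ d)
    (F : EuclideanSpace ℝ (Fin d) → EuclideanSpace ℝ (Fin d))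
    (hcont : Continuous F) (hF : CyclicallyQuasiMonotoneS F)
    (hnv : ∀ x, F x ≠ 0) (x x' : EuclideanSpace ℝ (Fin d)) :
    (interior (CS F x) ∩ interior (CS F x')).Nonempty :=
  stmt16_general d F hcont hF hnv x x'
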